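/- In the effect-free fragment of call-by-push-value (no recursion, no nondeterminism), big-step evaluation is deterministic and total on closed well-typed computations: for every closed computation M : C there exists exactly one terminal computation R with M ⇓ R. -/

import Mathlib

/-! The effect-free fragment of call-by-push-value (booleans, thunks,
functions, returners; no recursion, no nondeterminism), with intrinsically
typed syntax, capture-avoiding substitution, and big-step evaluation. -/

mutual
/-- CBPV value types. -/
inductive VTy : Type
  | bool : VTy
  | thunk : CTy → VTy
/-- CBPV computation types. -/
inductive CTy : Type
  | arr : VTy → CTy → CTy
  | free : VTy → CTy
end

/-- Typed de Bruijn variables. -/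
inductive CVar : List VTy → VTy → Type
  | vz {Γ A} : CVar (A :: Γ) A
  | vs {Γ A B} : CVar Γ A → CVar (B :: Γ) A

mutual
/-- Well-typed CBPV values in context. -/
inductive Val : List VTy → VTy → Type
  | var {Γ A} : CVar Γ A → Val Γ A
  | tt {Γ} : Val Γ VTy.bool
  | ff {Γ} : Val Γ VTy.bool
  | thunk {Γ C} : Comp Γ C → Val Γ (VTy.thunk C)
/-- Well-typed CBPV computations in context. -/
inductive Comp : List VTy → CTy → Type
  | lam {Γ A C} : Comp (A :: Γ) C → Comp Γ (CTy.arr A C)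
  | app {Γ A C} : Val Γ A → Comp Γ (CTy.arr A C) → Comp Γ C
  | ret {Γ A} : Val Γ A → Comp Γ (CTy.free A)
  | toIn {Γ A C} : Comp Γ (CTy.free A) → Comp (A :: Γ) C → Comp Γ C
  | ite {Γ C} : Val Γ VTy.bool → Comp Γ C → Comp Γ C → Comp Γ C
  | force {Γ C} : Val Γ (VTy.thunk C) → Comp Γ C
end

/-- Renamings between contexts. -/
def Ren (Γ Δ : List VTy) : Type := ∀ A, CVar Γ A → CVar Δ A

/-- Lift a renaming under a binder. -/
def liftRen {Γ Δ : List VTy} {A : VTy} (r : Ren Γ Δ) : Ren (A :: Γ) (A :: Δ) :=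
  fun _ x =>
    match x with
    | CVar.vz => CVar.vz
    | CVar.vs y => CVar.vs (r _ y)

mutual
/-- Renaming on values. -/
def renVal : {Γ Δ : List VTy} → {A : VTy} → Ren Γ Δ → Val Γ A → Val Δ A
  | _, _, _, r, Val.var x => Val.var (r _ x)
  | _, _, _, _, Val.tt => Val.tt
  | _, _, _, _, Val.ff => Val.ff
  | _, _, _, r, Val.thunk M => Val.thunk (renComp r M)
/-- Renaming on computations. -/
def renComp : {Γ Δ : List VTy} → {C : CTy} → Ren Γ Δ → Comp Γ C → Comp Δ C
  | _, _, _, r, Comp.lam M => Comp.lam (renComp (liftRen r) M)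
  | _, _, _, r, Comp.app V M => Comp.app (renVal r V) (renComp r M)
  | _, _, _, r, Comp.ret V => Comp.ret (renVal r V)
  | _, _, _, r, Comp.toIn M N => Comp.toIn (renComp r M) (renComp (liftRen r) N)
  | _, _, _, r, Comp.ite V M N =>
      Comp.ite (renVal r V) (renComp r M) (renComp r N)
  | _, _, _, r, Comp.force V => Comp.force (renVal r V)
end

/-- Substitutions: variables to values. -/
def CSub (Γ Δ : List VTy) : Type := ∀ A, CVar Γ A → Val Δ A

/-- Lift a substitution under a binder. -/
def liftSub {Γ Δ : List VTy} {A : VTy} (s : CSub Γ Δ) : CSub (A :: Γ) (A :: Δ) :=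
  fun _ x =>
    match x with
    | CVar.vz => Val.var CVar.vz
    | CVar.vs y => renVal (fun _ => CVar.vs) (s _ y)

mutual
/-- Substitution on values. -/
def substVal : {Γ Δ : List VTy} → {A : VTy} → CSub Γ Δ → Val Γ A → Val Δ A
  | _, _, _, s, Val.var x => s _ x
  | _, _, _, _, Val.tt => Val.tt
  | _, _, _, _, Val.ff => Val.ff
  | _, _, _, s, Val.thunk M => Val.thunk (substComp s M)
/-- Substitution on computations. -/
def substComp : {Γ Δ : List VTy} → {C : CTy} → CSub Γ Δ → Comp Γ C → Comp Δ C
  | _, _, _, s, Comp.lam M => Comp.lam (substComp (liftSub s) M)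
  | _, _, _, s, Comp.app V M => Comp.app (substVal s V) (substComp s M)
  | _, _, _, s, Comp.ret V => Comp.ret (substVal s V)
  | _, _, _, s, Comp.toIn M N => Comp.toIn (substComp s M) (substComp (liftSub s) N)
  | _, _, _, s, Comp.ite V M N =>
      Comp.ite (substVal s V) (substComp s M) (substComp s N)
  | _, _, _, s, Comp.force V => Comp.force (substVal s V)
end

/-- The substitution sending the unique variable to `V`. -/
def sub1 {A : VTy} (V : Val [] A) : CSub [A] [] := fun B x =>
  match B, x with
  | _, CVar.vz => V
  | _, CVar.vs y => nomatch y

/-- Substituting a single closed value for the free variable. -/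
def subst1 {A : VTy} {C : CTy} (V : Val [] A) (M : Comp [A] C) : Comp [] C :=
  substComp (sub1 V) M

/-- Big-step evaluation of closed computations. -/
inductive Eval : {C : CTy} → Comp [] C → Comp [] C → Prop
  | lam {A C} (M : Comp [A] C) : Eval (Comp.lam M) (Comp.lam M)
  | ret {A} (V : Val [] A) : Eval (Comp.ret V) (Comp.ret V)
  | app {A C} {V : Val [] A} {M : Comp [] (CTy.arr A C)} {N R} :
      Eval M (Comp.lam N) → Eval (subst1 V N) R → Eval (Comp.app V M) R
  | toIn {A C} {M : Comp [] (CTy.free A)} {V : Val [] A} {N : Comp [A] C} {R} :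
      Eval M (Comp.ret V) → Eval (subst1 V N) R → Eval (Comp.toIn M N) R
  | iteTrue {C} {M N : Comp [] C} {R} : Eval M R → Eval (Comp.ite Val.tt M N) R
  | iteFalse {C} {M N : Comp [] C} {R} : Eval N R → Eval (Comp.ite Val.ff M N) R
  | force {C} {M : Comp [] C} {R} : Eval M R → Eval (Comp.force (Val.thunk M)) R

/-- Terminal computations: λ-abstractions and `return V`. -/
inductive Terminal : {C : CTy} → Comp [] C → Prop
  | lam {A C} (M : Comp [A] C) : Terminal (Comp.lam M)
  | ret {A} (V : Val [] A) : Terminal (Comp.ret V)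

/-! Determinism is a direct induction on derivations. Totality cannot be proved by induction on
`M`, since `app` and `toIn` continue with a substituted body `subst1 V N` that is not a subterm;
instead we use Tait's method: a type-directed reducibility predicate that, at function types,
asks the body to stay reducible under every reducible argument. Every term is reducible under
every reducible closing substitution, and a reducible computation evaluates. -/

theorem liftRen_comp {Γ Δ Θ : List VTy} {A : VTy} (r₁ : Ren Γ Δ) (r₂ : Ren Δ Θ) :
    (fun B x => liftRen (A := A) r₂ B (liftRen r₁ B x))
      = liftRen (A := A) (fun B x => r₂ B (r₁ B x)) := by
  funext B x; cases x <;> rfl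

mutual
theorem renVal_renVal : {Γ Δ Θ : List VTy} → {A : VTy} → (r₁ : Ren Γ Δ) → (r₂ : Ren Δ Θ) →
    (V : Val Γ A) → renVal r₂ (renVal r₁ V) = renVal (fun B x => r₂ B (r₁ B x)) V
  | _, _, _, _, _, _, Val.var _ => rfl
  | _, _, _, _, _, _, Val.tt => rfl
  | _, _, _, _, _, _, Val.ff => rfl
  | _, _, _, _, r₁, r₂, Val.thunk M => by
      simp only [renVal]; rw [renComp_renComp r₁ r₂ M]
theorem renComp_renComp : {Γ Δ Θ : List VTy} → {C : CTy} → (r₁ : Ren Γ Δ) → (r₂ : Ren Δ Θ) →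
    (M : Comp Γ C) → renComp r₂ (renComp r₁ M) = renComp (fun B x => r₂ B (r₁ B x)) M
  | _, _, _, _, r₁, r₂, Comp.lam M => by
      simp only [renComp]; rw [renComp_renComp (liftRen r₁) (liftRen r₂) M, liftRen_comp]
  | _, _, _, _, r₁, r₂, Comp.app V M => by
      simp only [renComp]; rw [renVal_renVal r₁ r₂ V, renComp_renComp r₁ r₂ M]
  | _, _, _, _, r₁, r₂, Comp.ret V => by
      simp only [renComp]; rw [renVal_renVal r₁ r₂ V]
  | _, _, _, _, r₁, r₂, Comp.toIn M N => by
      simp only [renComp]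
      rw [renComp_renComp r₁ r₂ M, renComp_renComp (liftRen r₁) (liftRen r₂) N, liftRen_comp]
  | _, _, _, _, r₁, r₂, Comp.ite V M N => by
      simp only [renComp]
      rw [renVal_renVal r₁ r₂ V, renComp_renComp r₁ r₂ M, renComp_renComp r₁ r₂ N]
  | _, _, _, _, r₁, r₂, Comp.force V => by
      simp only [renComp]; rw [renVal_renVal r₁ r₂ V]
end

theorem liftSub_liftRen {Γ Δ Θ : List VTy} {A : VTy} (r : Ren Γ Δ) (s : CSub Δ Θ) :
    (fun B x => liftSub (A := A) s B (liftRen r B x))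
      = liftSub (A := A) (fun B x => s B (r B x)) := by
  funext B x; cases x <;> rfl

mutual
theorem substVal_renVal : {Γ Δ Θ : List VTy} → {A : VTy} → (r : Ren Γ Δ) → (s : CSub Δ Θ) →
    (V : Val Γ A) → substVal s (renVal r V) = substVal (fun B x => s B (r B x)) V
  | _, _, _, _, _, _, Val.var _ => rfl
  | _, _, _, _, _, _, Val.tt => rfl
  | _, _, _, _, _, _, Val.ff => rfl
  | _, _, _, _, r, s, Val.thunk M => by
      simp only [renVal, substVal]; rw [substComp_renComp r s M]
theorem substComp_renComp : {Γ Δ Θ : List VTy} → {C : CTy} → (r : Ren Γ Δ) → (s : CSub Δ Θ) →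
    (M : Comp Γ C) → substComp s (renComp r M) = substComp (fun B x => s B (r B x)) M
  | _, _, _, _, r, s, Comp.lam M => by
      simp only [renComp, substComp]
      rw [substComp_renComp (liftRen r) (liftSub s) M, liftSub_liftRen]
  | _, _, _, _, r, s, Comp.app V M => by
      simp only [renComp, substComp]; rw [substVal_renVal r s V, substComp_renComp r s M]
  | _, _, _, _, r, s, Comp.ret V => by
      simp only [renComp, substComp]; rw [substVal_renVal r s V]
  | _, _, _, _, r, s, Comp.toIn M N => by
      simp only [renComp, substComp]
      rw [substComp_renComp r s M, substComp_renComp (liftRen r) (liftSub s) N, liftSub_liftRen]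
  | _, _, _, _, r, s, Comp.ite V M N => by
      simp only [renComp, substComp]
      rw [substVal_renVal r s V, substComp_renComp r s M, substComp_renComp r s N]
  | _, _, _, _, r, s, Comp.force V => by
      simp only [renComp, substComp]; rw [substVal_renVal r s V]
end

theorem liftRen_liftSub {Γ Δ Θ : List VTy} {A : VTy} (s : CSub Γ Δ) (r : Ren Δ Θ) :
    (fun B x => renVal (liftRen (A := A) r) (liftSub s B x))
      = liftSub (A := A) (fun B x => renVal r (s B x)) := by
  funext B x
  cases x with
  | vz => rfl
  | vs y => exact (renVal_renVal _ _ (s _ y)).trans (renVal_renVal r _ (s _ y)).symm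

mutual
theorem renVal_substVal : {Γ Δ Θ : List VTy} → {A : VTy} → (s : CSub Γ Δ) → (r : Ren Δ Θ) →
    (V : Val Γ A) → renVal r (substVal s V) = substVal (fun B x => renVal r (s B x)) V
  | _, _, _, _, _, _, Val.var _ => rfl
  | _, _, _, _, _, _, Val.tt => rfl
  | _, _, _, _, _, _, Val.ff => rfl
  | _, _, _, _, s, r, Val.thunk M => by
      simp only [substVal, renVal]; rw [renComp_substComp s r M]
theorem renComp_substComp : {Γ Δ Θ : List VTy} → {C : CTy} → (s : CSub Γ Δ) → (r : Ren Δ Θ) →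
    (M : Comp Γ C) → renComp r (substComp s M) = substComp (fun B x => renVal r (s B x)) M
  | _, _, _, _, s, r, Comp.lam M => by
      simp only [substComp, renComp]
      rw [renComp_substComp (liftSub s) (liftRen r) M, liftRen_liftSub]
  | _, _, _, _, s, r, Comp.app V M => by
      simp only [substComp, renComp]; rw [renVal_substVal s r V, renComp_substComp s r M]
  | _, _, _, _, s, r, Comp.ret V => by
      simp only [substComp, renComp]; rw [renVal_substVal s r V]
  | _, _, _, _, s, r, Comp.toIn M N => by
      simp only [substComp, renComp]
      rw [renComp_substComp s r M, renComp_substComp (liftSub s) (liftRen r) N, liftRen_liftSub]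
  | _, _, _, _, s, r, Comp.ite V M N => by
      simp only [substComp, renComp]
      rw [renVal_substVal s r V, renComp_substComp s r M, renComp_substComp s r N]
  | _, _, _, _, s, r, Comp.force V => by
      simp only [substComp, renComp]; rw [renVal_substVal s r V]
end

theorem liftSub_comp {Γ Δ Θ : List VTy} {A : VTy} (s₁ : CSub Γ Δ) (s₂ : CSub Δ Θ) :
    (fun B x => substVal (liftSub (A := A) s₂) (liftSub s₁ B x))
      = liftSub (A := A) (fun B x => substVal s₂ (s₁ B x)) := by
  funext B x
  cases x with
  | vz => rfl
  | vs y => exact (substVal_renVal _ _ (s₁ _ y)).trans (renVal_substVal _ _ (s₁ _ y)).symm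

mutual
theorem substVal_substVal : {Γ Δ Θ : List VTy} → {A : VTy} → (s₁ : CSub Γ Δ) →
    (s₂ : CSub Δ Θ) → (V : Val Γ A) →
    substVal s₂ (substVal s₁ V) = substVal (fun B x => substVal s₂ (s₁ B x)) V
  | _, _, _, _, _, _, Val.var _ => rfl
  | _, _, _, _, _, _, Val.tt => rfl
  | _, _, _, _, _, _, Val.ff => rfl
  | _, _, _, _, s₁, s₂, Val.thunk M => by
      simp only [substVal]; rw [substComp_substComp s₁ s₂ M]
theorem substComp_substComp : {Γ Δ Θ : List VTy} → {C : CTy} → (s₁ : CSub Γ Δ) →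
    (s₂ : CSub Δ Θ) → (M : Comp Γ C) →
    substComp s₂ (substComp s₁ M) = substComp (fun B x => substVal s₂ (s₁ B x)) M
  | _, _, _, _, s₁, s₂, Comp.lam M => by
      simp only [substComp]
      rw [substComp_substComp (liftSub s₁) (liftSub s₂) M, liftSub_comp]
  | _, _, _, _, s₁, s₂, Comp.app V M => by
      simp only [substComp]; rw [substVal_substVal s₁ s₂ V, substComp_substComp s₁ s₂ M]
  | _, _, _, _, s₁, s₂, Comp.ret V => by
      simp only [substComp]; rw [substVal_substVal s₁ s₂ V]
  | _, _, _, _, s₁, s₂, Comp.toIn M N => by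
      simp only [substComp]
      rw [substComp_substComp s₁ s₂ M, substComp_substComp (liftSub s₁) (liftSub s₂) N,
        liftSub_comp]
  | _, _, _, _, s₁, s₂, Comp.ite V M N => by
      simp only [substComp]
      rw [substVal_substVal s₁ s₂ V, substComp_substComp s₁ s₂ M, substComp_substComp s₁ s₂ N]
  | _, _, _, _, s₁, s₂, Comp.force V => by
      simp only [substComp]; rw [substVal_substVal s₁ s₂ V]
end

theorem liftSub_var {Γ : List VTy} {A : VTy} :
    liftSub (A := A) (fun _ => Val.var : CSub Γ Γ) = fun _ => Val.var := by
  funext B x; cases x <;> rfl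

mutual
theorem substVal_var : {Γ : List VTy} → {A : VTy} → (V : Val Γ A) →
    substVal (fun _ => Val.var) V = V
  | _, _, Val.var _ => rfl
  | _, _, Val.tt => rfl
  | _, _, Val.ff => rfl
  | _, _, Val.thunk M => by
      simp only [substVal]; rw [substComp_var M]
theorem substComp_var : {Γ : List VTy} → {C : CTy} → (M : Comp Γ C) →
    substComp (fun _ => Val.var) M = M
  | _, _, Comp.lam M => by
      simp only [substComp]; rw [liftSub_var, substComp_var M]
  | _, _, Comp.app V M => by
      simp only [substComp]; rw [substVal_var V, substComp_var M]
  | _, _, Comp.ret V => by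
      simp only [substComp]; rw [substVal_var V]
  | _, _, Comp.toIn M N => by
      simp only [substComp]; rw [liftSub_var, substComp_var M, substComp_var N]
  | _, _, Comp.ite V M N => by
      simp only [substComp]; rw [substVal_var V, substComp_var M, substComp_var N]
  | _, _, Comp.force V => by
      simp only [substComp]; rw [substVal_var V]
end

theorem CSub.eq_var_of_nil (s : CSub [] []) : s = fun _ => Val.var := by
  funext B x; cases x

theorem substVal_nil {A : VTy} (s : CSub [] []) (V : Val [] A) : substVal s V = V := by
  rw [s.eq_var_of_nil, substVal_var]

theorem substComp_nil {C : CTy} (s : CSub [] []) (M : Comp [] C) : substComp s M = M := by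
  rw [s.eq_var_of_nil, substComp_var]

def scons {Γ : List VTy} {A : VTy} (V : Val [] A) (s : CSub Γ []) : CSub (A :: Γ) [] :=
  fun B x =>
    match B, x with
    | _, CVar.vz => V
    | _, CVar.vs y => s _ y

theorem subst1_substComp_liftSub {Γ : List VTy} {A : VTy} {C : CTy} (V : Val [] A)
    (s : CSub Γ []) (M : Comp (A :: Γ) C) :
    subst1 V (substComp (liftSub s) M) = substComp (scons V s) M := by
  rw [subst1, substComp_substComp]
  congr 1
  funext B x
  cases x with
  | vz => rfl
  | vs y => exact (substVal_renVal _ _ (s _ y)).trans (substVal_nil _ _)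

theorem Val.eq_tt_or_eq_ff (V : Val [] VTy.bool) : V = Val.tt ∨ V = Val.ff := by
  rcases V with x | _ | _
  · nomatch x
  · exact Or.inl rfl
  · exact Or.inr rfl

mutual
def RedVal : {A : VTy} → Val [] A → Prop
  | VTy.bool, _ => True
  | VTy.thunk _, V => ∃ M, V = Val.thunk M ∧ RedComp M
def RedComp : {C : CTy} → Comp [] C → Prop
  | CTy.arr _ _, M => ∃ N, Eval M (Comp.lam N) ∧ ∀ V, RedVal V → RedComp (subst1 V N)
  | CTy.free _, M => ∃ V, Eval M (Comp.ret V) ∧ RedVal V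
end

def RedSub {Γ : List VTy} (s : CSub Γ []) : Prop := ∀ A x, RedVal (s A x)

theorem RedSub.scons {Γ : List VTy} {A : VTy} {V : Val [] A} {s : CSub Γ []}
    (hV : RedVal V) (hs : RedSub s) : RedSub (scons V s) := by
  intro B x
  cases x with
  | vz => exact hV
  | vs y => exact hs _ y

theorem RedComp.exists_eval {C : CTy} {M : Comp [] C} (h : RedComp M) : ∃ R, Eval M R := by
  cases C with
  | arr => obtain ⟨N, hN, -⟩ := h; exact ⟨_, hN⟩
  | free => obtain ⟨V, hV, -⟩ := h; exact ⟨_, hV⟩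

theorem RedComp.head_expand {C : CTy} {M M' : Comp [] C}
    (h : ∀ R, Eval M' R → Eval M R) (hM' : RedComp M') : RedComp M := by
  cases C with
  | arr => obtain ⟨N, hN, hN_red⟩ := hM'; exact ⟨N, h _ hN, hN_red⟩
  | free => obtain ⟨V, hV, hV_red⟩ := hM'; exact ⟨V, h _ hV, hV_red⟩

mutual
theorem redVal_substVal : {Γ : List VTy} → {A : VTy} → (V : Val Γ A) → (s : CSub Γ []) →
    RedSub s → RedVal (substVal s V)
  | _, _, Val.var x, _, hs => hs _ x
  | _, _, Val.tt, _, _ => trivial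
  | _, _, Val.ff, _, _ => trivial
  | _, _, Val.thunk M, s, hs => ⟨substComp s M, rfl, redComp_substComp M s hs⟩
theorem redComp_substComp : {Γ : List VTy} → {C : CTy} → (M : Comp Γ C) → (s : CSub Γ []) →
    RedSub s → RedComp (substComp s M)
  | _, _, Comp.lam M, s, hs => by
      refine ⟨substComp (liftSub s) M, Eval.lam _, fun V hV => ?_⟩
      rw [subst1_substComp_liftSub]
      exact redComp_substComp M (scons V s) (hs.scons hV)
  | _, _, Comp.app V M, s, hs => by
      obtain ⟨N, hM, hN⟩ := redComp_substComp M s hs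
      exact (hN _ (redVal_substVal V s hs)).head_expand fun R hR => Eval.app hM hR
  | _, _, Comp.ret V, s, hs => ⟨substVal s V, Eval.ret _, redVal_substVal V s hs⟩
  | _, _, Comp.toIn M N, s, hs => by
      obtain ⟨V, hM, hV⟩ := redComp_substComp M s hs
      have hN : RedComp (subst1 V (substComp (liftSub s) N)) := by
        rw [subst1_substComp_liftSub]
        exact redComp_substComp N (scons V s) (hs.scons hV)
      exact hN.head_expand fun R hR => Eval.toIn hM hR
  | _, _, Comp.ite V M N, s, hs => by
      simp only [substComp]
      rcases (substVal s V).eq_tt_or_eq_ff with hV | hV <;> rw [hV]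
      · exact (redComp_substComp M s hs).head_expand fun R hR => Eval.iteTrue hR
      · exact (redComp_substComp N s hs).head_expand fun R hR => Eval.iteFalse hR
  | _, _, Comp.force V, s, hs => by
      obtain ⟨M, hV, hM⟩ := redVal_substVal V s hs
      simp only [substComp]
      rw [hV]
      exact hM.head_expand fun R hR => Eval.force hR
end

theorem redComp_of_closed {C : CTy} (M : Comp [] C) : RedComp M := by
  have h := redComp_substComp M (fun _ x => nomatch x) (fun _ x => nomatch x)
  rwa [substComp_nil (fun _ x => nomatch x)] at h

theorem Eval.terminal {C : CTy} {M R : Comp [] C} (h : Eval M R) : Terminal R := by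
  induction h with
  | lam M => exact Terminal.lam M
  | ret V => exact Terminal.ret V
  | app _ _ _ ih | toIn _ _ _ ih | iteTrue _ ih | iteFalse _ ih | force _ ih => exact ih

theorem Eval.det {C : CTy} {M R₁ R₂ : Comp [] C} (h₁ : Eval M R₁) (h₂ : Eval M R₂) :
    R₁ = R₂ := by
  induction h₁ with
  | lam | ret => cases h₂; rfl
  | app _ _ ihM ihN =>
    cases h₂ with
    | app hM hN => cases ihM hM; exact ihN hN
  | toIn _ _ ihM ihN =>
    cases h₂ with
    | toIn hM hN => cases ihM hM; exact ihN hN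
  | iteTrue _ ih => cases h₂ with | iteTrue h => exact ih h
  | iteFalse _ ih => cases h₂ with | iteFalse h => exact ih h
  | force _ ih => cases h₂ with | force h => exact ih h

/-- In the effect-free fragment of CBPV, big-step evaluation is deterministic
and total on closed well-typed computations: every closed computation
evaluates to exactly one terminal computation. -/
theorem stmt_18 {C : CTy} (M : Comp [] C) :
    ∃! R : Comp [] C, Terminal R ∧ Eval M R := by
  obtain ⟨R, hR⟩ := (redComp_of_closed M).exists_eval
  exact ⟨R, ⟨hR.terminal, hR⟩, fun _ h => h.2.det hR⟩
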